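/- arXiv:2110.08325 — 2 statements merged into one kernel-verified Lean document; each statement's English description precedes it below -/
import Mathlib

section
/- For every positive integer n, the complete graph K_{4n} on 4n vertices is a minor of the ideal Chimera graph C_{n,n} (the triangular TRIAD embedding scheme); in particular, K_{12} is a minor of C_{3,3}. -/
/-- Vertex set of the Chimera graph `C_{c,r}`: coordinates `(x, y, s, k)`. -/
abbrev ChimeraVertex (c r : ℕ) := Fin c × Fin r × Fin 2 × Fin 4

/-- Base relation of the Chimera graph: unit-cell `K_{4,4}` edges,
vertical edges (`s = 0`) and horizontal edges (`s = 1`). -/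
def chimeraRel (c r : ℕ) (v w : ChimeraVertex c r) : Prop :=
  (v.1 = w.1 ∧ v.2.1 = w.2.1 ∧ v.2.2.1 ≠ w.2.2.1) ∨
  (v.1 = w.1 ∧ v.2.2.1 = 0 ∧ w.2.2.1 = 0 ∧ v.2.2.2 = w.2.2.2 ∧
    (w.2.1 : ℕ) = (v.2.1 : ℕ) + 1) ∨
  (v.2.1 = w.2.1 ∧ v.2.2.1 = 1 ∧ w.2.2.1 = 1 ∧ v.2.2.2 = w.2.2.2 ∧
    (w.1 : ℕ) = (v.1 : ℕ) + 1)

/-- The Chimera graph `C_{c,r}`. -/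
def Chimera (c r : ℕ) : SimpleGraph (ChimeraVertex c r) :=
  SimpleGraph.fromRel (chimeraRel c r)

/-- A vertex `(x,y,s,k)` of the Chimera graph is even if `x + y + s` is even. -/
def chimeraEven {c r : ℕ} (v : ChimeraVertex c r) : Prop :=
  ((v.1 : ℕ) + (v.2.1 : ℕ) + (v.2.2.1 : ℕ)) % 2 = 0

instance {c r : ℕ} : DecidablePred (chimeraEven (c := c) (r := r)) := fun _ => by
  unfold chimeraEven; infer_instance

/-- `φ` is a minor embedding of `G` into `H`: every vertex of `G` is assigned a nonempty
branch set inducing a connected subgraph of `H`, the branch sets are pairwise disjoint,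
and every edge of `G` is realized by an edge of `H` between the two branch sets. -/
def IsMinorEmbedding {V W : Type*} (G : SimpleGraph V) (H : SimpleGraph W)
    (φ : V → Set W) : Prop :=
  (∀ v, (φ v).Nonempty) ∧
  (∀ v, (H.induce (φ v)).Connected) ∧
  (Pairwise fun v w => Disjoint (φ v) (φ w)) ∧
  (∀ ⦃v w⦄, G.Adj v w → ∃ a ∈ φ v, ∃ b ∈ φ w, H.Adj a b)

/-- `G` is a minor of `H` (equivalently, `G` is embeddable in `H`). -/
def IsMinorOf {V W : Type*} (G : SimpleGraph V) (H : SimpleGraph W) : Prop :=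
  ∃ φ : V → Set W, IsMinorEmbedding G H φ

/-!
Label the vertices of `K_{4n}` by pairs `(k, a)` with `k < 4` and `a < n`. The branch set of
`(k, a)` is the cross formed by the `k`-th vertical line of column `a` and the `k`-th horizontal
line of row `a`; the two lines meet in the unit cell `(a, a)`, so the cross is connected.
Distinct pairs give disjoint crosses, and the crosses of `(k, a)` and `(k', b)` are joined by a
`K_{4,4}` edge of the unit cell `(a, b)`.
-/

open SimpleGraph

lemma SimpleGraph.Preconnected.induce_range {V W : Type*} {G : SimpleGraph V}
    {H : SimpleGraph W} (hG : G.Preconnected) (f : G →g H) :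
    (H.induce (Set.range f)).Preconnected :=
  hG.map ⟨fun v => ⟨f v, v, rfl⟩, f.map_adj⟩ (by rintro ⟨_, v, rfl⟩; exact ⟨v, rfl⟩)

lemma IsMinorOf.of_embedding {U V W : Type*} {F : SimpleGraph U} {G : SimpleGraph V}
    {H : SimpleGraph W} (f : F ↪g G) (h : IsMinorOf G H) : IsMinorOf F H := by
  obtain ⟨φ, hne, hconn, hdisj, hadj⟩ := h
  exact ⟨φ ∘ f, fun u => hne (f u), fun u => hconn (f u),
    fun u u' huu' => hdisj (f.injective.ne huu'), fun _ _ huu' => hadj (f.map_adj_iff.mpr huu')⟩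

namespace Chimera

variable {c r : ℕ}

lemma adj_cell (x : Fin c) (y : Fin r) (k k' : Fin 4) :
    (Chimera c r).Adj (x, y, 0, k) (x, y, 1, k') := by
  simp [Chimera, chimeraRel]

lemma adj_vertical (x : Fin c) {y y' : Fin r} (h : (y : ℕ) + 1 = y') (k : Fin 4) :
    (Chimera c r).Adj (x, y, 0, k) (x, y', 0, k) := by
  simp [Chimera, chimeraRel, Fin.ext_iff]
  omega

lemma adj_horizontal {x x' : Fin c} (h : (x : ℕ) + 1 = x') (y : Fin r) (k : Fin 4) :
    (Chimera c r).Adj (x, y, 1, k) (x', y, 1, k) := by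
  simp [Chimera, chimeraRel, Fin.ext_iff]
  omega

def columnHom (x : Fin c) (k : Fin 4) : pathGraph r →g Chimera c r where
  toFun y := (x, y, 0, k)
  map_rel' h := by
    rcases pathGraph_adj.mp h with h | h
    exacts [adj_vertical x h k, (adj_vertical x h k).symm]

def rowHom (y : Fin r) (k : Fin 4) : pathGraph c →g Chimera c r where
  toFun x := (x, y, 1, k)
  map_rel' h := by
    rcases pathGraph_adj.mp h with h | h
    exacts [adj_horizontal h y k, (adj_horizontal h y k).symm]

def cross (x : Fin c) (y : Fin r) (k : Fin 4) : Set (ChimeraVertex c r) :=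
  Set.range (columnHom x k) ∪ Set.range (rowHom y k)

lemma mem_cross {x : Fin c} {y : Fin r} {k : Fin 4} {v : ChimeraVertex c r} :
    v ∈ cross x y k ↔
      v.2.2.2 = k ∧ (v.2.2.1 = 0 ∧ v.1 = x ∨ v.2.2.1 = 1 ∧ v.2.1 = y) := by
  obtain ⟨x', y', s, k'⟩ := v
  simp only [cross, columnHom, rowHom, Set.mem_union, Set.mem_range, RelHom.coeFn_mk,
    Prod.mk.injEq]
  constructor
  · rintro (⟨_, rfl, rfl, rfl, rfl⟩ | ⟨_, rfl, rfl, rfl, rfl⟩) <;> simp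
  · rintro ⟨rfl, ⟨rfl, rfl⟩ | ⟨rfl, rfl⟩⟩
    exacts [Or.inl ⟨y', rfl, rfl, rfl, rfl⟩, Or.inr ⟨x', rfl, rfl, rfl, rfl⟩]

lemma connected_induce_cross (x : Fin c) (y : Fin r) (k : Fin 4) :
    ((Chimera c r).induce (cross x y k)).Connected :=
  connected_induce_union ((pathGraph_preconnected r).induce_range _)
    ((pathGraph_preconnected c).induce_range _) ⟨y, rfl⟩ ⟨x, rfl⟩ (adj_cell x y k k)

lemma disjoint_cross {x x' : Fin c} {y y' : Fin r} {k k' : Fin 4} (hx : x ≠ x' ∨ k ≠ k')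
    (hy : y ≠ y' ∨ k ≠ k') : Disjoint (cross x y k) (cross x' y' k') := by
  rw [Set.disjoint_left]
  intro v hv hv'
  rw [mem_cross] at hv hv'
  grind

lemma top_isMinorOf (n : ℕ) : IsMinorOf (⊤ : SimpleGraph (Fin 4 × Fin n)) (Chimera n n) := by
  refine ⟨fun p => cross p.2 p.2 p.1, fun p => ?_, fun p => connected_induce_cross _ _ _,
    fun p q hpq => ?_, fun p q hpq => ?_⟩
  · exact Set.nonempty_coe_sort.mp (connected_induce_cross p.2 p.2 p.1).nonempty
  · have hne : p.2 ≠ q.2 ∨ p.1 ≠ q.1 := not_and_or.mp fun h => hpq (Prod.ext h.2 h.1)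
    exact disjoint_cross hne hne
  · exact ⟨(p.2, q.2, 0, p.1), mem_cross.mpr (by simp), (p.2, q.2, 1, q.1),
      mem_cross.mpr (by simp), adj_cell _ _ _ _⟩

end Chimera

theorem complete_graph_minor_of_chimera_general (n : ℕ) :
    IsMinorOf (⊤ : SimpleGraph (Fin (4 * n))) (Chimera n n) ∧
    IsMinorOf (⊤ : SimpleGraph (Fin 12)) (Chimera 3 3) :=
  have h (m : ℕ) : IsMinorOf (⊤ : SimpleGraph (Fin (4 * m))) (Chimera m m) :=
    (Chimera.top_isMinorOf m).of_embedding
      (Embedding.completeGraph finProdFinEquiv.symm.toEmbedding)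
  ⟨h n, h 3⟩

/-- For every positive integer `n`, the complete graph `K_{4n}` is a minor of the ideal
Chimera graph `C_{n,n}`; in particular `K_{12}` is a minor of `C_{3,3}`. -/
theorem complete_graph_minor_of_chimera (n : ℕ) (hn : 0 < n) :
    IsMinorOf (⊤ : SimpleGraph (Fin (4 * n))) (Chimera n n) ∧
    IsMinorOf (⊤ : SimpleGraph (Fin 12)) (Chimera 3 3) :=
  complete_graph_minor_of_chimera_general n
end

section
/- In the complete bipartite graph K_{4,4}, for every vertex a of one part and every vertex b of the other part there exists a Hamiltonian path from a to b; i.e., the Chimera unit cell is Hamiltonian-laceable. -/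
/-!
Walk back and forth between the two parts: `a, y₁, x₁, y₂, x₂, …, yₖ, xₖ, b`. Every edge from the
left part to the right part exists, so any such alternating sequence is a walk, and it is a
Hamiltonian path as soon as `a, x₁, …, xₖ` lists the left part and `y₁, …, yₖ, b` the right part,
each exactly once. When both parts have the same size this is possible for any `a` and `b`.
-/

theorem Finset.nodup_cons_toList_erase {α : Type*} [Fintype α] [DecidableEq α] (a : α) :
    (a :: (Finset.univ.erase a).toList).Nodup :=
  List.nodup_cons.2 ⟨by simp, Finset.nodup_toList _⟩

theorem Finset.mem_cons_toList_erase {α : Type*} [Fintype α] [DecidableEq α] (a x : α) :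
    x ∈ a :: (Finset.univ.erase a).toList := by
  simp [em]

namespace SimpleGraph.completeBipartiteGraph

variable {α β : Type*}

theorem adj_inl_inr (a : α) (b : β) : (completeBipartiteGraph α β).Adj (.inl a) (.inr b) := by
  simp

/-- The walk `a, y₁, x₁, …, yₖ, xₖ, b` for `ps = [(y₁, x₁), …, (yₖ, xₖ)]`. -/
def zigzag : (a : α) → List (β × α) → (b : β) → (completeBipartiteGraph α β).Walk (.inl a) (.inr b)
  | a, [], b => (adj_inl_inr a b).toWalk
  | a, (y, x) :: ps, b => .cons (adj_inl_inr a y) (.cons (adj_inl_inr x y).symm (zigzag x ps b))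

@[simp]
theorem inl_mem_support_zigzag {a x : α} {ps : List (β × α)} {b : β} :
    .inl x ∈ (zigzag a ps b).support ↔ x ∈ a :: ps.map Prod.snd := by
  induction ps generalizing a with
  | nil => simp [zigzag]
  | cons p ps ih => simp [zigzag, ih]

@[simp]
theorem inr_mem_support_zigzag {a : α} {ps : List (β × α)} {b y : β} :
    .inr y ∈ (zigzag a ps b).support ↔ y ∈ b :: ps.map Prod.fst := by
  induction ps generalizing a with
  | nil => simp [zigzag]
  | cons p ps ih => simp [zigzag, ih, or_left_comm, eq_comm]

theorem isPath_zigzag {a : α} {ps : List (β × α)} {b : β}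
    (hl : (a :: ps.map Prod.snd).Nodup) (hr : (b :: ps.map Prod.fst).Nodup) :
    (zigzag a ps b).IsPath := by
  induction ps generalizing a with
  | nil => exact Walk.IsPath.mk' (by simp [zigzag])
  | cons p ps ih =>
    obtain ⟨y, x⟩ := p
    simp only [List.map_cons, List.nodup_cons, List.mem_cons, not_or] at hl hr
    refine (Walk.IsPath.cons (ih (List.nodup_cons.2 ⟨hl.2.1, hl.2.2⟩) ?_) ?_).cons ?_
    · exact List.nodup_cons.2 ⟨hr.1.2, hr.2.2⟩
    · simp only [inr_mem_support_zigzag, List.mem_cons, not_or]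
      exact ⟨Ne.symm hr.1.1, hr.2.1⟩
    · simpa [zigzag] using hl.1

theorem isHamiltonian_zigzag [DecidableEq α] [DecidableEq β] {a : α} {ps : List (β × α)} {b : β}
    (hl : (a :: ps.map Prod.snd).Nodup) (hr : (b :: ps.map Prod.fst).Nodup)
    (hl' : ∀ x, x ∈ a :: ps.map Prod.snd) (hr' : ∀ y, y ∈ b :: ps.map Prod.fst) :
    (zigzag a ps b).IsHamiltonian := by
  refine (isPath_zigzag hl hr).isHamiltonian_of_mem ?_
  rintro (x | y)
  · simpa using hl' x
  · simpa using hr' y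

theorem exists_isHamiltonian_of_card_eq [Fintype α] [Fintype β] [DecidableEq α] [DecidableEq β]
    (h : Fintype.card α = Fintype.card β) (a : α) (b : β) :
    ∃ p : (completeBipartiteGraph α β).Walk (.inl a) (.inr b), p.IsHamiltonian := by
  set xs := (Finset.univ.erase a).toList
  set ys := (Finset.univ.erase b).toList
  have hlen : ys.length = xs.length := by simp [xs, ys, Finset.card_erase_of_mem, h]
  have hxs : (ys.zip xs).map Prod.snd = xs := List.map_snd_zip hlen.ge
  have hys : (ys.zip xs).map Prod.fst = ys := List.map_fst_zip hlen.le
  refine ⟨zigzag a (ys.zip xs) b, isHamiltonian_zigzag ?_ ?_ ?_ ?_⟩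
  all_goals simp only [hxs, hys]
  · exact Finset.nodup_cons_toList_erase a
  · exact Finset.nodup_cons_toList_erase b
  · exact Finset.mem_cons_toList_erase a
  · exact Finset.mem_cons_toList_erase b

end SimpleGraph.completeBipartiteGraph

/-- The complete bipartite graph `K_{4,4}` (the Chimera unit cell) is Hamiltonian-laceable:
between any vertex of one part and any vertex of the other part there is a Hamiltonian
path. -/
theorem completeBipartite_four_four_hamiltonian_laceable (a b : Fin 4) :
    ∃ p : (completeBipartiteGraph (Fin 4) (Fin 4)).Walk (Sum.inl a) (Sum.inr b),
      p.IsHamiltonian :=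
  SimpleGraph.completeBipartiteGraph.exists_isHamiltonian_of_card_eq rfl a b
end
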